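/- arXiv:2507.23164 — 4 statements merged into one kernel-verified Lean document; each statement's English description precedes it below -/
import Mathlib

section
/- There exists a map ψ : ℝ → ℝ² such that: ψ is infinitely differentiable (C^∞); ψ is injective; ψ is a topological embedding (a homeomorphism onto its image with the subspace topology); ‖ψ'(t)‖ = 1 for every t ∈ ℝ (ψ has unit speed, i.e. it is a Riemannian isometric embedding of the real line); and the range of ψ is a bounded subset of ℝ². -/
open Real Set FormalMultilinearSeries
open scoped NNReal ENNReal

noncomputable def spiralR (t : ℝ) : ℝ := 3 + Real.arctan t / 2

noncomputable def spiralR' (t : ℝ) : ℝ := 1 / (2 * (1 + t ^ 2))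

noncomputable def spiralW (t : ℝ) : ℝ := Real.sqrt (1 - spiralR' t ^ 2)

noncomputable def spiralTh' (t : ℝ) : ℝ := spiralW t / spiralR t

noncomputable def spiralTh (t : ℝ) : ℝ := ∫ s in (0:ℝ)..t, spiralTh' s

lemma spiralR'_pos (t : ℝ) : 0 < spiralR' t := by
  unfold spiralR'; positivity

lemma spiralR'_le (t : ℝ) : spiralR' t ≤ 1 / 2 := by
  unfold spiralR'
  rw [div_le_div_iff₀ (by positivity) (by norm_num)]
  nlinarith [sq_nonneg t]

lemma spiralW_sq (t : ℝ) : spiralW t ^ 2 = 1 - spiralR' t ^ 2 := by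
  apply Real.sq_sqrt
  nlinarith [spiralR'_pos t, spiralR'_le t]

lemma spiralR_bounds (t : ℝ) : 2 < spiralR t ∧ spiralR t < 4 := by
  have h1 := Real.neg_pi_div_two_lt_arctan t
  have h2 := Real.arctan_lt_pi_div_two t
  have hπ : Real.pi < 4 := Real.pi_lt_d2.trans (by norm_num)
  constructor <;> (unfold spiralR; nlinarith)

lemma spiralR_pos (t : ℝ) : 0 < spiralR t := by linarith [(spiralR_bounds t).1]

lemma hasDerivAt_spiralR (t : ℝ) : HasDerivAt spiralR (spiralR' t) t := by
  have h := ((Real.hasDerivAt_arctan t).div_const 2).const_add 3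
  refine (show HasDerivAt spiralR _ t from h).congr_deriv ?_
  unfold spiralR'
  field_simp

lemma contDiff_spiralR : ContDiff ℝ (⊤ : ℕ∞) spiralR :=
  contDiff_const.add (Real.contDiff_arctan.div_const 2)

lemma contDiff_spiralR' : ContDiff ℝ (⊤ : ℕ∞) spiralR' := by
  apply ContDiff.div contDiff_const
  · exact contDiff_const.mul (contDiff_const.add (contDiff_id.pow 2))
  · intro t
    have : (0:ℝ) < 1 + t ^ 2 := by positivity
    positivity

lemma contDiff_spiralW : ContDiff ℝ (⊤ : ℕ∞) spiralW := by
  apply ContDiff.sqrt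
  · exact contDiff_const.sub (contDiff_spiralR'.pow 2)
  · intro t
    nlinarith [spiralR'_pos t, spiralR'_le t]

lemma contDiff_spiralTh' : ContDiff ℝ (⊤ : ℕ∞) spiralTh' :=
  contDiff_spiralW.div contDiff_spiralR fun t => (spiralR_pos t).ne'

lemma hasDerivAt_spiralTh (t : ℝ) : HasDerivAt spiralTh (spiralTh' t) t :=
  (contDiff_spiralTh'.continuous.integral_hasStrictDerivAt 0 t).hasDerivAt

lemma contDiff_spiralTh : ContDiff ℝ (⊤ : ℕ∞) spiralTh := by
  have hd : deriv spiralTh = spiralTh' := funext fun t => (hasDerivAt_spiralTh t).deriv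
  rw [contDiff_infty_iff_deriv, hd]
  exact ⟨fun t => (hasDerivAt_spiralTh t).differentiableAt, contDiff_spiralTh'⟩

noncomputable def spiralF (t : ℝ) : Fin 2 → ℝ :=
  ![spiralR t * Real.cos (spiralTh t), spiralR t * Real.sin (spiralTh t)]

noncomputable def spiralF' (t : ℝ) : Fin 2 → ℝ :=
  ![spiralR' t * Real.cos (spiralTh t) - spiralR t * Real.sin (spiralTh t) * spiralTh' t,
    spiralR' t * Real.sin (spiralTh t) + spiralR t * Real.cos (spiralTh t) * spiralTh' t]

lemma hasDerivAt_spiralF (t : ℝ) : HasDerivAt spiralF (spiralF' t) t := by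
  rw [hasDerivAt_pi]
  intro i
  fin_cases i
  · show HasDerivAt (fun x => spiralR x * Real.cos (spiralTh x))
      (spiralR' t * Real.cos (spiralTh t) - spiralR t * Real.sin (spiralTh t) * spiralTh' t) t
    have h1 : HasDerivAt (fun s => Real.cos (spiralTh s))
        (-Real.sin (spiralTh t) * spiralTh' t) t :=
      (Real.hasDerivAt_cos (spiralTh t)).comp t (hasDerivAt_spiralTh t)
    have h2 := (hasDerivAt_spiralR t).mul h1
    refine (show HasDerivAt (fun x => spiralR x * Real.cos (spiralTh x)) _ t from h2).congr_deriv ?_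
    ring
  · show HasDerivAt (fun x => spiralR x * Real.sin (spiralTh x))
      (spiralR' t * Real.sin (spiralTh t) + spiralR t * Real.cos (spiralTh t) * spiralTh' t) t
    have h1 : HasDerivAt (fun s => Real.sin (spiralTh s))
        (Real.cos (spiralTh t) * spiralTh' t) t :=
      (Real.hasDerivAt_sin (spiralTh t)).comp t (hasDerivAt_spiralTh t)
    have h2 := (hasDerivAt_spiralR t).mul h1
    refine (show HasDerivAt (fun x => spiralR x * Real.sin (spiralTh x)) _ t from h2).congr_deriv ?_
    ring

lemma contDiff_spiralF : ContDiff ℝ (⊤ : ℕ∞) spiralF := by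
  rw [contDiff_pi]
  intro i
  fin_cases i
  · exact contDiff_spiralR.mul (Real.contDiff_cos.comp contDiff_spiralTh)
  · exact contDiff_spiralR.mul (Real.contDiff_sin.comp contDiff_spiralTh)

noncomputable def spiralPsi (t : ℝ) : EuclideanSpace ℝ (Fin 2) :=
  (EuclideanSpace.equiv (Fin 2) ℝ).symm (spiralF t)

lemma spiralPsi_apply (t : ℝ) (i : Fin 2) : spiralPsi t i = spiralF t i := rfl

lemma norm_spiralPsi (t : ℝ) : ‖spiralPsi t‖ = spiralR t := by
  rw [EuclideanSpace.norm_eq]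
  rw [Fin.sum_univ_two]
  have h : ‖spiralPsi t 0‖ ^ 2 + ‖spiralPsi t 1‖ ^ 2 = spiralR t ^ 2 := by
    rw [Real.norm_eq_abs, Real.norm_eq_abs, sq_abs, sq_abs]
    simp only [spiralPsi_apply, spiralF]
    have := Real.sin_sq_add_cos_sq (spiralTh t)
    simp only [Matrix.cons_val_zero, Matrix.cons_val_one, Matrix.head_cons]
    nlinarith
  rw [h, Real.sqrt_sq (spiralR_pos t).le]

lemma hasDerivAt_spiralPsi (t : ℝ) :
    HasDerivAt spiralPsi ((EuclideanSpace.equiv (Fin 2) ℝ).symm (spiralF' t)) t := by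
  exact ((EuclideanSpace.equiv (Fin 2) ℝ).symm.toContinuousLinearMap.hasFDerivAt).comp_hasDerivAt
    t (hasDerivAt_spiralF t)

/-- there is a smooth, injective, unit-speed topological embedding
`ψ : ℝ → ℝ²` with bounded range (a spiral curve in an annulus). -/
theorem exists_bounded_unit_speed_embedding_real_line :
    ∃ ψ : ℝ → EuclideanSpace ℝ (Fin 2),
      ContDiff ℝ (⊤ : ℕ∞) ψ ∧
      Function.Injective ψ ∧
      Topology.IsEmbedding ψ ∧
      (∀ t : ℝ, ‖deriv ψ t‖ = 1) ∧
      Bornology.IsBounded (Set.range ψ) := by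
  refine ⟨spiralPsi, ?_, ?_, ?_, ?_, ?_⟩
  · exact ((EuclideanSpace.equiv (Fin 2) ℝ).symm.contDiff).comp contDiff_spiralF
  · -- injectivity
    intro t1 t2 h
    have : spiralR t1 = spiralR t2 := by
      rw [← norm_spiralPsi, ← norm_spiralPsi, h]
    have : Real.arctan t1 = Real.arctan t2 := by
      unfold spiralR at this; linarith
    exact Real.arctan_injective this
  · -- embedding
    have harctan : Topology.IsEmbedding Real.arctan := by
      apply Real.arctan_strictMono.isEmbedding_of_ordConnected
      rw [Real.range_arctan]
      exact ordConnected_Ioo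
    have hcont : Continuous spiralPsi :=
      (((EuclideanSpace.equiv (Fin 2) ℝ).symm.contDiff).comp contDiff_spiralF).continuous
    have hg : Continuous (fun v : EuclideanSpace ℝ (Fin 2) => 2 * (‖v‖ - 3)) := by
      continuity
    apply Topology.IsEmbedding.of_comp hcont hg
    have : (fun v : EuclideanSpace ℝ (Fin 2) => 2 * (‖v‖ - 3)) ∘ spiralPsi = Real.arctan := by
      funext t
      simp only [Function.comp_apply, norm_spiralPsi, spiralR]
      ring
    rw [this]
    exact harctan
  · -- unit speed
    intro t
    rw [(hasDerivAt_spiralPsi t).deriv]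
    rw [EuclideanSpace.norm_eq, Fin.sum_univ_two]
    have hkey : ‖(EuclideanSpace.equiv (Fin 2) ℝ).symm (spiralF' t) 0‖ ^ 2 +
        ‖(EuclideanSpace.equiv (Fin 2) ℝ).symm (spiralF' t) 1‖ ^ 2 = 1 := by
      rw [Real.norm_eq_abs, Real.norm_eq_abs, sq_abs, sq_abs]
      have h0 : (EuclideanSpace.equiv (Fin 2) ℝ).symm (spiralF' t) 0 = spiralF' t 0 := rfl
      have h1 : (EuclideanSpace.equiv (Fin 2) ℝ).symm (spiralF' t) 1 = spiralF' t 1 := rfl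
      rw [h0, h1]
      simp only [spiralF', Matrix.cons_val_zero, Matrix.cons_val_one, Matrix.head_cons]
      have hsc := Real.sin_sq_add_cos_sq (spiralTh t)
      have hw : (spiralR t * spiralTh' t) ^ 2 = 1 - spiralR' t ^ 2 := by
        rw [← spiralW_sq t]
        unfold spiralTh'
        field_simp [(spiralR_pos t).ne']
      nlinarith
    rw [hkey, Real.sqrt_one]
  · -- bounded
    apply (Metric.isBounded_closedBall (x := (0 : EuclideanSpace ℝ (Fin 2))) (r := 4)).subset
    rw [Set.range_subset_iff]
    intro t
    rw [Metric.mem_closedBall, dist_zero_right, norm_spiralPsi]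
    exact (spiralR_bounds t).2.le
end

section
/- Let n be a positive natural number. There exists a map Ψ : ℝⁿ → ℝ^{2n} such that: Ψ is infinitely differentiable (C^∞); Ψ is a topological embedding; the range of Ψ is a bounded subset of ℝ^{2n}; and for every x ∈ ℝⁿ the differential DΨ_x = fderiv ℝ Ψ x is a linear isometry for the inner products, i.e. ⟪DΨ_x v, DΨ_x w⟫ = ⟪v, w⟫ for all v, w ∈ ℝⁿ. In other words, ℝⁿ with its standard flat metric admits a smooth isometric embedding into a bounded subset of ℝ^{2n}. -/
open scoped InnerProductSpace

open intervalIntegral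

namespace BddIso


/-- The coefficient of `ofScalars` is the scalar. -/
lemma coeff_ofScalars {b : ℕ → ℝ} (n : ℕ) :
    (FormalMultilinearSeries.ofScalars ℝ b).coeff n = b n := by
  rw [show (FormalMultilinearSeries.ofScalars ℝ b).coeff n
      = (FormalMultilinearSeries.ofScalars ℝ b) n (fun _ => 1) from rfl,
    FormalMultilinearSeries.ofScalars_apply_eq]
  simp

/-- A primitive of an analytic function is analytic. -/
lemma analyticAt_primitive {h : ℝ → ℝ} (hc : Continuous h) (t₀ : ℝ)
    (ha : AnalyticAt ℝ h t₀) :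
    AnalyticAt ℝ (fun t => ∫ s in (0:ℝ)..t, h s) t₀ := by
  obtain ⟨p, hp⟩ := ha
  rw [hasFPowerSeriesAt_iff, Metric.eventually_nhds_iff] at hp
  obtain ⟨ε, εpos, H⟩ := hp
  set a : ℕ → ℝ := fun n => p.coeff n with ha_def
  set θ : ℝ → ℝ := fun t => ∫ s in (0:ℝ)..t, h s with hθ_def
  set b : ℕ → ℝ := fun n => Nat.rec (θ t₀) (fun m _ => a m / (m + 1)) n with hb_def
  refine ⟨FormalMultilinearSeries.ofScalars ℝ b, ?_⟩
  rw [hasFPowerSeriesAt_iff]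
  filter_upwards [Metric.ball_mem_nhds (0:ℝ) (half_pos εpos)] with z hz
  rw [Metric.mem_ball, dist_zero_right] at hz
  simp only [coeff_ofScalars]
  rw [← hasSum_nat_add_iff' 1]
  have hb0 : ∀ n : ℕ, b (n + 1) = a n / (n + 1) := fun n => rfl
  simp only [Finset.range_one, Finset.sum_singleton, pow_zero, one_smul, hb0]
  -- goal : HasSum (fun n => z ^ (n+1) • (a n / (n+1))) (θ (t₀ + z) - b 0)
  -- summability of coefficients
  set ζ : ℝ := (‖z‖ + ε / 2) / 2 with hζ_def
  have hζpos : 0 < ζ := by positivity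
  have hzζ : ‖z‖ < ζ := by simp only [hζ_def]; linarith [norm_nonneg z]
  have hζε : ζ < ε := by simp only [hζ_def]; linarith [norm_nonneg z]
  have hsumζ : Summable fun n => ζ ^ n • a n :=
    (H (by simpa [abs_of_pos hζpos] using hζε)).summable
  obtain ⟨C, hC⟩ := hsumζ.norm.tendsto_atTop_zero.bddAbove_range.imp
    (fun C hC => fun n => hC (Set.mem_range_self n))
  have habs : Summable fun n => ‖z‖ ^ n * |a n| := by
    have hq : ‖z‖ / ζ < 1 := (div_lt_one hζpos).2 hzζ
    refine Summable.of_nonneg_of_le (fun n => by positivity)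
      (fun n => ?_) ((summable_geometric_of_lt_one (by positivity) hq).mul_right C)
    have h1 : ‖ζ ^ n • a n‖ ≤ C := hC n
    rw [norm_smul, norm_pow, Real.norm_eq_abs, Real.norm_eq_abs, abs_of_pos hζpos] at h1
    calc ‖z‖ ^ n * |a n| = (‖z‖ / ζ) ^ n * (ζ ^ n * |a n|) := by
          rw [div_pow, div_mul_eq_mul_div, mul_left_comm, mul_div_cancel_left₀ _ (pow_ne_zero n hζpos.ne')]
      _ ≤ (‖z‖ / ζ) ^ n * C := mul_le_mul_of_nonneg_left h1 (by positivity)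
  -- term-by-term integration
  have fC_cont : ∀ n : ℕ, Continuous fun u : ℝ => u ^ n • a n :=
    fun n => (continuous_pow n).smul continuous_const
  have key : HasSum (fun n => ∫ u in (0:ℝ)..z, u ^ n • a n)
      (∫ u in (0:ℝ)..z, ∑' n : ℕ, (u ^ n • a n)) := by
    have := hasSum_intervalIntegral_of_summable_norm (a := (0:ℝ)) (b := z)
      (f := fun n => ContinuousMap.mk _ (fC_cont n)) ?_
    · exact this
    · refine Summable.of_nonneg_of_le (fun n => norm_nonneg _) (fun n => ?_) habs
      refine ContinuousMap.norm_le _ (by positivity) |>.2 fun x => ?_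
      obtain ⟨u, hu⟩ := x
      have huz : |u| ≤ ‖z‖ := by
        rw [Real.norm_eq_abs]
        rcases Set.mem_uIcc.1 hu with ⟨h1, h2⟩ | ⟨h1, h2⟩ <;> rw [abs_le] <;>
          constructor <;> linarith [abs_nonneg z, le_abs_self z, neg_abs_le z]
      simp only [ContinuousMap.restrict_apply, ContinuousMap.coe_mk, smul_eq_mul,
        Real.norm_eq_abs, abs_mul, abs_pow]
      exact mul_le_mul_of_nonneg_right
        (pow_le_pow_left₀ (abs_nonneg u) huz n) (abs_nonneg _)
  have hsum_eq : ∀ u : ℝ, u ∈ Set.uIcc (0:ℝ) z → (∑' n : ℕ, (u ^ n • a n)) = h (t₀ + u) := by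
    intro u hu
    have huz : |u| ≤ ‖z‖ := by
      rw [Real.norm_eq_abs]
      rcases Set.mem_uIcc.1 hu with ⟨h1, h2⟩ | ⟨h1, h2⟩ <;> rw [abs_le] <;>
        constructor <;> linarith [abs_nonneg z, le_abs_self z, neg_abs_le z]
    exact (H (by rw [dist_zero_right, Real.norm_eq_abs]; linarith)).tsum_eq
  rw [intervalIntegral.integral_congr hsum_eq] at key
  have intθ : (∫ u in (0:ℝ)..z, h (t₀ + u)) = θ (t₀ + z) - θ t₀ := by
    rw [intervalIntegral.integral_comp_add_left, add_zero]
    exact (integral_interval_sub_left (hc.intervalIntegrable _ _)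
      (hc.intervalIntegrable _ _)).symm
  rw [intθ] at key
  have eval : ∀ n : ℕ, (∫ u in (0:ℝ)..z, u ^ n • a n) = z ^ (n + 1) • (a n / (n + 1)) := by
    intro n
    simp only [smul_eq_mul]
    rw [intervalIntegral.integral_mul_const, integral_pow,
      zero_pow (Nat.succ_ne_zero n), sub_zero]
    ring
  simpa only [eval, show b 0 = θ t₀ from rfl] using key


-- Phase 2 (to append after phase 1)
noncomputable section

/-- radius -/
def rr (t : ℝ) : ℝ := 2 + Real.arctan t / 2
/-- derivative of radius -/
def rd (t : ℝ) : ℝ := 1 / (2 * (1 + t ^ 2))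
/-- 1 - rd² -/
def qq (t : ℝ) : ℝ := 1 - rd t ^ 2
/-- angular speed -/
def hh (t : ℝ) : ℝ := Real.sqrt (qq t) / rr t
/-- angle -/
def th (t : ℝ) : ℝ := ∫ s in (0:ℝ)..t, hh s

lemma rr_bounds (t : ℝ) : 1 < rr t ∧ rr t < 3 := by
  have h1 := Real.arctan_lt_pi_div_two t
  have h2 := Real.neg_pi_div_two_lt_arctan t
  have hπ : Real.pi < 4 := by linarith [Real.pi_lt_d2]
  constructor <;> (unfold rr; nlinarith)

lemma rr_pos (t : ℝ) : 0 < rr t := lt_trans one_pos (rr_bounds t).1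
lemma rr_ne (t : ℝ) : rr t ≠ 0 := (rr_pos t).ne'

lemma contDiff_rr : ContDiff ℝ (⊤ : ℕ∞) rr :=
  contDiff_const.add (Real.contDiff_arctan.div_const 2)

lemma hasDerivAt_rr (t : ℝ) : HasDerivAt rr (rd t) t := by
  have h := ((Real.hasDerivAt_arctan t).div_const 2).const_add 2
  refine h.congr_deriv ?_
  unfold rd
  rw [div_div]
  ring_nf

lemma rd_pos (t : ℝ) : 0 < rd t := by unfold rd; positivity

lemma rd_le_half (t : ℝ) : rd t ≤ 1 / 2 := by
  unfold rd
  rw [div_le_div_iff₀ (by positivity) two_pos]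
  nlinarith [sq_nonneg t]

lemma qq_pos (t : ℝ) : 0 < qq t := by
  have h1 := rd_pos t
  have h2 := rd_le_half t
  unfold qq; nlinarith

lemma qq_ne (t : ℝ) : qq t ≠ 0 := (qq_pos t).ne'

lemma contDiff_rd : ContDiff ℝ (⊤ : ℕ∞) rd := by
  apply contDiff_const.div
  · exact contDiff_const.mul (contDiff_const.add (contDiff_id.pow 2))
  · intro t; positivity

lemma contDiff_qq : ContDiff ℝ (⊤ : ℕ∞) qq := contDiff_const.sub (contDiff_rd.pow 2)

lemma contDiff_sqq : ContDiff ℝ (⊤ : ℕ∞) (fun t => Real.sqrt (qq t)) :=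
  contDiff_qq.sqrt qq_ne

lemma contDiff_hh : ContDiff ℝ (⊤ : ℕ∞) hh := contDiff_sqq.div contDiff_rr rr_ne

lemma continuous_hh : Continuous hh := contDiff_hh.continuous

lemma hasDerivAt_th (t : ℝ) : HasDerivAt th (hh t) t :=
  intervalIntegral.integral_hasDerivAt_right
    (continuous_hh.intervalIntegrable _ _)
    (continuous_hh.stronglyMeasurableAtFilter _ _)
    continuous_hh.continuousAt

lemma contDiff_th : ContDiff ℝ (⊤ : ℕ∞) th := by
  have : AnalyticOnNhd ℝ th Set.univ := fun x _ =>
    analyticAt_primitive continuous_hh x ((by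
      have hrd : ContDiff ℝ ⊤ rd := by
        apply contDiff_const.div
        · exact contDiff_const.mul (contDiff_const.add (contDiff_id.pow 2))
        · intro t; positivity
      have hqq : ContDiff ℝ ⊤ qq := contDiff_const.sub (hrd.pow 2)
      have hrr : ContDiff ℝ ⊤ rr := contDiff_const.add (Real.contDiff_arctan.div_const 2)
      exact (hqq.sqrt qq_ne).div hrr rr_ne : ContDiff ℝ ⊤ hh).analyticOnNhd x (Set.mem_univ x))
  exact this.contDiff

/-- component functions of the spiral -/
def cc : Fin 2 → ℝ → ℝ :=
  ![fun t => rr t * Real.cos (th t), fun t => rr t * Real.sin (th t)]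

/-- their derivatives -/
def dd : Fin 2 → ℝ → ℝ :=
  ![fun t => rd t * Real.cos (th t) - Real.sqrt (qq t) * Real.sin (th t),
    fun t => rd t * Real.sin (th t) + Real.sqrt (qq t) * Real.cos (th t)]

lemma rr_mul_hh (t : ℝ) : rr t * hh t = Real.sqrt (qq t) := by
  unfold hh; rw [mul_div_assoc', mul_comm, mul_div_assoc, div_self (rr_ne t), mul_one]

lemma contDiff_cc (j : Fin 2) : ContDiff ℝ (⊤ : ℕ∞) (cc j) := by
  fin_cases j <;> simp only [cc, Fin.mk_zero, Fin.mk_one, Matrix.cons_val_zero, Matrix.cons_val_one, Matrix.head_cons]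
  · exact contDiff_rr.mul (Real.contDiff_cos.comp contDiff_th)
  · exact contDiff_rr.mul (Real.contDiff_sin.comp contDiff_th)

lemma hasDerivAt_cc (j : Fin 2) (t : ℝ) : HasDerivAt (cc j) (dd j t) t := by
  have hcos : HasDerivAt (fun t => Real.cos (th t)) (-Real.sin (th t) * hh t) t :=
    (Real.hasDerivAt_cos (th t)).comp t (hasDerivAt_th t)
  have hsin : HasDerivAt (fun t => Real.sin (th t)) (Real.cos (th t) * hh t) t :=
    (Real.hasDerivAt_sin (th t)).comp t (hasDerivAt_th t)
  fin_cases j <;>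
    simp only [cc, dd, Fin.mk_zero, Fin.mk_one, Matrix.cons_val_zero, Matrix.cons_val_one, Matrix.head_cons]
  · have := (hasDerivAt_rr t).mul hcos
    refine this.congr_deriv ?_
    rw [← rr_mul_hh t]
    ring
  · have := (hasDerivAt_rr t).mul hsin
    refine this.congr_deriv ?_
    rw [← rr_mul_hh t]
    ring

lemma dd_sq (t : ℝ) : dd 0 t ^ 2 + dd 1 t ^ 2 = 1 := by
  have hs := Real.sin_sq_add_cos_sq (th t)
  have hq : Real.sqrt (qq t) ^ 2 = qq t := Real.sq_sqrt (qq_pos t).le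
  simp only [dd, Fin.mk_zero, Fin.mk_one, Matrix.cons_val_zero, Matrix.cons_val_one, Matrix.head_cons]
  have hqq : qq t = 1 - rd t ^ 2 := rfl
  nlinarith [hs, hq]

lemma cc_sq (t : ℝ) : cc 0 t ^ 2 + cc 1 t ^ 2 = rr t ^ 2 := by
  have hs := Real.sin_sq_add_cos_sq (th t)
  simp only [cc, Fin.mk_zero, Fin.mk_one, Matrix.cons_val_zero, Matrix.cons_val_one, Matrix.head_cons]
  nlinarith [hs]

lemma cc_abs_le (j : Fin 2) (t : ℝ) : |cc j t| ≤ 3 := by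
  have h1 := (rr_bounds t).1
  have h2 := (rr_bounds t).2
  fin_cases j <;>
    simp only [cc, Fin.mk_zero, Fin.mk_one, Matrix.cons_val_zero, Matrix.cons_val_one, Matrix.head_cons] <;>
    rw [abs_mul] <;>
    [(have := Real.abs_cos_le_one (th t)); (have := Real.abs_sin_le_one (th t))] <;>
    nlinarith [abs_nonneg (rr t), abs_of_pos (rr_pos t)]

lemma strictMono_rr : StrictMono rr := fun a b hab => by
  have := Real.arctan_strictMono hab
  unfold rr; linarith

lemma isEmbedding_rr : Topology.IsEmbedding rr := by
  apply strictMono_rr.isEmbedding_of_ordConnected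
  constructor
  rintro x ⟨s, rfl⟩ y ⟨u, rfl⟩ z hz
  obtain ⟨hz1, hz2⟩ := hz
  refine ⟨Real.tan (2 * (z - 2)), ?_⟩
  have hs1 := Real.neg_pi_div_two_lt_arctan s
  have hu2 := Real.arctan_lt_pi_div_two u
  have h1 : -(Real.pi / 2) < 2 * (z - 2) := by unfold rr at hz1; linarith
  have h2 : 2 * (z - 2) < Real.pi / 2 := by unfold rr at hz2; linarith
  unfold rr
  rw [Real.arctan_tan h1 h2]
  ring

end

end BddIso

-- Phase 3
namespace BddIso
open Topology

/-- a product of embeddings of ℝ is an embedding of pi types -/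
lemma isEmbedding_piMap {ι α β : Type*} [TopologicalSpace α] [TopologicalSpace β]
    {f : α → β} (hf : Topology.IsEmbedding f) :
    Topology.IsEmbedding (fun (x : ι → α) i => f (x i)) := by
  constructor
  · rw [Topology.isInducing_iff_nhds]
    intro x
    rw [nhds_pi, nhds_pi, Filter.pi, Filter.pi, Filter.comap_iInf]
    refine iInf_congr fun i => ?_
    rw [hf.isInducing.nhds_eq_comap, Filter.comap_comap, Filter.comap_comap]
    rfl
  · exact fun a b hab => funext fun i => hf.injective (congrFun hab i)

noncomputable section

variable (n : ℕ)

/-- the spiral product map -/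
def Phi : EuclideanSpace ℝ (Fin n) → EuclideanSpace ℝ (Fin n × Fin 2) :=
  fun x => WithLp.toLp 2 (fun p : Fin n × Fin 2 => cc p.2 (x p.1))

/-- its differential at x, as a continuous linear map -/
def L (x : EuclideanSpace ℝ (Fin n)) :
    EuclideanSpace ℝ (Fin n) →L[ℝ] EuclideanSpace ℝ (Fin n × Fin 2) :=
  ((PiLp.continuousLinearEquiv 2 ℝ (fun _ : Fin n × Fin 2 => ℝ)).symm.toContinuousLinearMap).comp
    (ContinuousLinearMap.pi fun p : Fin n × Fin 2 =>
      dd p.2 (x p.1) • EuclideanSpace.proj (𝕜 := ℝ) p.1)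

lemma L_apply (x v : EuclideanSpace ℝ (Fin n)) (p : Fin n × Fin 2) :
    L n x v p = dd p.2 (x p.1) * v p.1 := rfl

lemma hasFDerivAt_Phi (x : EuclideanSpace ℝ (Fin n)) :
    HasFDerivAt (Phi n) (L n x) x := by
  have h1 : HasFDerivAt (fun (x : EuclideanSpace ℝ (Fin n)) (p : Fin n × Fin 2) =>
      cc p.2 (x p.1))
      (ContinuousLinearMap.pi fun p : Fin n × Fin 2 =>
        dd p.2 (x p.1) • EuclideanSpace.proj (𝕜 := ℝ) p.1) x := by
    rw [hasFDerivAt_pi]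
    intro p
    exact (hasDerivAt_cc p.2 (x p.1)).comp_hasFDerivAt x
      (EuclideanSpace.proj (𝕜 := ℝ) p.1).hasFDerivAt
  exact (((PiLp.continuousLinearEquiv 2 ℝ (fun _ : Fin n × Fin 2 => ℝ)).symm.toContinuousLinearMap).hasFDerivAt).comp x h1

lemma contDiff_Phi : ContDiff ℝ (⊤ : ℕ∞) (Phi n) := by
  have h1 : ContDiff ℝ (⊤ : ℕ∞) (fun (x : EuclideanSpace ℝ (Fin n)) (p : Fin n × Fin 2) =>
      cc p.2 (x p.1)) := by
    rw [contDiff_pi]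
    intro p
    exact (contDiff_cc p.2).comp (EuclideanSpace.proj (𝕜 := ℝ) p.1).contDiff
  exact (((PiLp.continuousLinearEquiv 2 ℝ (fun _ : Fin n × Fin 2 => ℝ)).symm.toContinuousLinearMap).contDiff).comp h1

lemma isEmbedding_Phi : Topology.IsEmbedding (Phi n) := by
  set N : EuclideanSpace ℝ (Fin n × Fin 2) → (Fin n → ℝ) :=
    fun y i => Real.sqrt ((y (i, 0)) ^ 2 + (y (i, 1)) ^ 2) with hN
  have hNcont : Continuous N := by
    refine continuous_pi fun i => Real.continuous_sqrt.comp ?_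
    have h0 : Continuous fun y : EuclideanSpace ℝ (Fin n × Fin 2) => y (i, 0) :=
      (continuous_apply ((i, 0) : Fin n × Fin 2)).comp
        (PiLp.continuousLinearEquiv 2 ℝ (fun _ : Fin n × Fin 2 => ℝ)).continuous
    have h1 : Continuous fun y : EuclideanSpace ℝ (Fin n × Fin 2) => y (i, 1) :=
      (continuous_apply ((i, 1) : Fin n × Fin 2)).comp
        (PiLp.continuousLinearEquiv 2 ℝ (fun _ : Fin n × Fin 2 => ℝ)).continuous
    exact (h0.pow 2).add (h1.pow 2)
  have hcomp : N ∘ (Phi n) = fun x i => rr (x i) := by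
    funext x i
    show Real.sqrt (cc 0 (x i) ^ 2 + cc 1 (x i) ^ 2) = rr (x i)
    rw [cc_sq, Real.sqrt_sq (rr_pos (x i)).le]
  have hR : Topology.IsEmbedding (fun (x : EuclideanSpace ℝ (Fin n)) i => rr (x i)) := by
    have base := isEmbedding_piMap (ι := Fin n) isEmbedding_rr
    exact base.comp
      (PiLp.continuousLinearEquiv 2 ℝ (fun _ : Fin n => ℝ)).toHomeomorph.isEmbedding
  exact Topology.IsEmbedding.of_comp (contDiff_Phi n).continuous hNcont (hcomp ▸ hR)

lemma norm_Phi_le (x : EuclideanSpace ℝ (Fin n)) :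
    ‖Phi n x‖ ≤ Real.sqrt (∑ _p : Fin n × Fin 2, (9:ℝ)) := by
  rw [EuclideanSpace.norm_eq]
  apply Real.sqrt_le_sqrt
  refine Finset.sum_le_sum fun p _ => ?_
  have := cc_abs_le p.2 (x p.1)
  have habs : ‖Phi n x p‖ = |cc p.2 (x p.1)| := rfl
  rw [habs]
  nlinarith [abs_nonneg (cc p.2 (x p.1))]

lemma inner_L (x v w : EuclideanSpace ℝ (Fin n)) :
    ⟪L n x v, L n x w⟫_ℝ = ⟪v, w⟫_ℝ := by
  rw [PiLp.inner_apply, PiLp.inner_apply]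
  simp only [RCLike.inner_apply, starRingEnd_apply, star_trivial, L_apply]
  rw [Fintype.sum_prod_type]
  refine Finset.sum_congr rfl fun i _ => ?_
  rw [Fin.sum_univ_two]
  show dd 0 (x i) * w i * (dd 0 (x i) * v i) + dd 1 (x i) * w i * (dd 1 (x i) * v i) = w i * v i
  linear_combination (v i * w i) * dd_sq (x i)

end
end BddIso

/-- flat `ℝⁿ` admits a smooth isometric embedding into a bounded
subset of `ℝ^{2n}`. -/
theorem exists_bounded_isometric_embedding_flat (n : ℕ) (hn : 0 < n) :
    ∃ Ψ : EuclideanSpace ℝ (Fin n) → EuclideanSpace ℝ (Fin (2 * n)),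
      ContDiff ℝ (⊤ : ℕ∞) Ψ ∧
      Topology.IsEmbedding Ψ ∧
      Bornology.IsBounded (Set.range Ψ) ∧
      (∀ (x v w : EuclideanSpace ℝ (Fin n)),
        ⟪fderiv ℝ Ψ x v, fderiv ℝ Ψ x w⟫_ℝ = ⟪v, w⟫_ℝ) := by
  classical
  set e := LinearIsometryEquiv.piLpCongrLeft 2 ℝ ℝ
    ((finProdFinEquiv (m := n) (n := 2)).trans (finCongr (Nat.mul_comm n 2))) with he
  refine ⟨fun x => e (BddIso.Phi n x), ?_, ?_, ?_, ?_⟩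
  · exact e.contDiff.comp (BddIso.contDiff_Phi n)
  · exact e.toHomeomorph.isEmbedding.comp (BddIso.isEmbedding_Phi n)
  · have hsub : Set.range (fun x => e (BddIso.Phi n x)) ⊆
        Metric.closedBall 0 (Real.sqrt (∑ _p : Fin n × Fin 2, (9:ℝ))) := by
      rintro _ ⟨x, rfl⟩
      rw [Metric.mem_closedBall, dist_zero_right, e.norm_map]
      exact BddIso.norm_Phi_le n x
    exact Metric.isBounded_closedBall.subset hsub
  · intro x v w
    have hF : HasFDerivAt (fun y => e (BddIso.Phi n y))
        (e.toLinearIsometry.toContinuousLinearMap.comp (BddIso.L n x)) x :=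
      (e.toLinearIsometry.toContinuousLinearMap.hasFDerivAt).comp x
        (BddIso.hasFDerivAt_Phi n x)
    rw [hF.fderiv]
    simp only [ContinuousLinearMap.coe_comp', Function.comp_apply,
      LinearIsometry.coe_toContinuousLinearMap, LinearIsometryEquiv.coe_toLinearIsometry]
    rw [e.inner_map_map]
    exact BddIso.inner_L n x v w
end

section
/- Let n be a positive natural number and let c > 0 be a real number. There exists a map Ψ : ℝⁿ → ℝ^{2n} such that: Ψ is infinitely differentiable (C^∞); Ψ is a topological embedding; the range of Ψ is a bounded subset of ℝ^{2n}; and for every x ∈ ℝⁿ and all v, w ∈ ℝⁿ one has ⟪DΨ_x v, DΨ_x w⟫ = c · ⟪v, w⟫, where DΨ_x = fderiv ℝ Ψ x. In other words, ℝⁿ equipped with the constant metric c·(standard inner product) admits a smooth isometric embedding into a bounded subset of ℝ^{2n}. -/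
open scoped InnerProductSpace

noncomputable section
namespace BddIsoAux
def qs (s : ℝ) : ℝ := Real.sqrt (2 + Real.sinh s ^ 2)
def th (s : ℝ) : ℝ :=
  (Real.cosh s * qs s + Real.log (qs s + Real.cosh s)) / 2
    - Real.sinh s * qs s / 2 + Real.arctan (Real.sinh s / qs s)
def thd (s : ℝ) : ℝ :=
  Real.sinh s * qs s - Real.cosh s ^ 3 / qs s + 1 / (qs s * Real.cosh s)
def rr (s : ℝ) : ℝ := 1 + Real.sinh s / Real.cosh s
lemma qs_arg_pos (s : ℝ) : (0:ℝ) < 2 + Real.sinh s ^ 2 := by positivity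
lemma qs_pos (s : ℝ) : 0 < qs s := Real.sqrt_pos.2 (qs_arg_pos s)
lemma qs_sq (s : ℝ) : qs s ^ 2 = 2 + Real.sinh s ^ 2 := Real.sq_sqrt (qs_arg_pos s).le
lemma hasDerivAt_qs (s : ℝ) :
    HasDerivAt qs (Real.sinh s * Real.cosh s / qs s) s := by
  have harg : HasDerivAt (fun s : ℝ => 2 + Real.sinh s ^ 2)
      (2 * Real.sinh s * Real.cosh s) s := by
    have := ((Real.hasDerivAt_sinh s).pow 2)
    simpa [mul_comm, mul_assoc, mul_left_comm] using this.const_add 2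
  have h := (Real.hasDerivAt_sqrt (qs_arg_pos s).ne').comp s harg
  refine h.congr_deriv (Eq.symm ?_)
  have hq := (qs_pos s).ne'
  field_simp [qs]
  ring
  rfl

lemma hasDerivAt_th (s : ℝ) : HasDerivAt th (thd s) s := by
  set S := Real.sinh s with hS
  set C := Real.cosh s with hC
  have hCpos : 0 < C := Real.cosh_pos s
  have hQpos : 0 < qs s := qs_pos s
  have hQ : qs s ^ 2 = 2 + S ^ 2 := qs_sq s
  have hC2 : C ^ 2 = S ^ 2 + 1 := Real.cosh_sq s
  have hq := hasDerivAt_qs s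
  -- L1
  have hA : HasDerivAt (fun s => Real.cosh s * qs s)
      (S * qs s + C * (S * C / qs s)) s := by
    exact (Real.hasDerivAt_cosh s).mul hq
  have hQC : 0 < qs s + C := by positivity
  have hB : HasDerivAt (fun s => Real.log (qs s + Real.cosh s))
      ((qs s + C)⁻¹ * (S * C / qs s + S)) s := by
    have := (Real.hasDerivAt_log hQC.ne').comp s (hq.add (Real.hasDerivAt_cosh s))
    exact this
  have L1 : HasDerivAt (fun s => (Real.cosh s * qs s + Real.log (qs s + Real.cosh s)) / 2)
      (S * qs s) s := by
    have h := (hA.add hB).div_const 2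
    refine h.congr_deriv (Eq.symm ?_)
    have hQne := hQpos.ne'
    have hQCne := hQC.ne'
    field_simp
    linear_combination (S*qs s + S*C) * hQ - (S*qs s + S*C) * hC2
  -- L2
  have L2 : HasDerivAt (fun s => Real.sinh s * qs s / 2) (C ^ 3 / qs s) s := by
    have h := ((Real.hasDerivAt_sinh s).mul hq).div_const 2
    refine h.congr_deriv (Eq.symm ?_)
    have hQne := hQpos.ne'
    field_simp
    linear_combination (-C) * hQ + (2*C) * hC2
  -- L3
  have L3 : HasDerivAt (fun s => Real.arctan (Real.sinh s / qs s)) (1 / (qs s * C)) s := by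
    have hdiv : HasDerivAt (fun s => Real.sinh s / qs s)
        ((C * qs s - S * (S * C / qs s)) / qs s ^ 2) s :=
      (Real.hasDerivAt_sinh s).div hq hQpos.ne'
    have h := (Real.hasDerivAt_arctan (S / qs s)).comp s hdiv
    refine h.congr_deriv (Eq.symm ?_)
    have hQne := hQpos.ne'
    field_simp
    linear_combination (-S^2) * hQ + (S^2 - qs s^2) * hC2
  have := (L1.sub L2).add L3
  exact this
end BddIsoAux

namespace BddIsoAux

def g0 (s : ℝ) : ℝ := rr s * Real.cos (th s)
def g1 (s : ℝ) : ℝ := rr s * Real.sin (th s)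
def d0 (s : ℝ) : ℝ := (Real.cosh s ^ 2)⁻¹ * Real.cos (th s) - rr s * Real.sin (th s) * thd s
def d1 (s : ℝ) : ℝ := (Real.cosh s ^ 2)⁻¹ * Real.sin (th s) + rr s * Real.cos (th s) * thd s

lemma cosh_ne (s : ℝ) : Real.cosh s ≠ 0 := (Real.cosh_pos s).ne'

lemma hasDerivAt_rr (s : ℝ) : HasDerivAt rr ((Real.cosh s ^ 2)⁻¹) s := by
  have h := ((Real.hasDerivAt_sinh s).div (Real.hasDerivAt_cosh s) (cosh_ne s)).const_add 1
  refine h.congr_deriv (Eq.symm ?_)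
  have := Real.cosh_sq_sub_sinh_sq s
  field_simp
  linear_combination (-1 : ℝ) * this

lemma hasDerivAt_g0 (s : ℝ) : HasDerivAt g0 (d0 s) s := by
  have h := (hasDerivAt_rr s).mul ((Real.hasDerivAt_cos (th s)).comp s (hasDerivAt_th s))
  refine h.congr_deriv (Eq.symm ?_)
  simp [d0]; ring

lemma hasDerivAt_g1 (s : ℝ) : HasDerivAt g1 (d1 s) s := by
  have h := (hasDerivAt_rr s).mul ((Real.hasDerivAt_sin (th s)).comp s (hasDerivAt_th s))
  refine h.congr_deriv (Eq.symm ?_)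
  simp [d1]; ring

lemma rr_pos (s : ℝ) : 0 < rr s := by
  have h1 : rr s = Real.exp s / Real.cosh s := by
    rw [rr, ← Real.cosh_add_sinh]; field_simp
  rw [h1]; positivity

lemma rr_lt_two (s : ℝ) : rr s < 2 := by
  have hC := Real.cosh_pos s
  have h2 : 2 - rr s = Real.exp (-s) / Real.cosh s := by
    rw [rr, ← Real.cosh_sub_sinh]; field_simp; rw [Real.cosh_eq]; ring
  nlinarith [Real.exp_pos (-s), div_pos (Real.exp_pos (-s)) hC]

lemma rr_thd (s : ℝ) : rr s * thd s = Real.sinh s * qs s / Real.cosh s ^ 2 := by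
  have hQne := (qs_pos s).ne'
  have hCne := cosh_ne s
  have hQ := qs_sq s
  have hC2 := Real.cosh_sq s
  have hE : Real.cosh s + Real.sinh s = Real.exp s := Real.cosh_add_sinh s
  rw [eq_div_iff (pow_ne_zero 2 hCne), rr, thd]
  field_simp
  linear_combination (Real.cosh s*Real.sinh s^2 + Real.cosh s^2*Real.sinh s - Real.sinh s) * hQ +
    (-Real.cosh s*(Real.cosh s^2+Real.sinh s^2+1) - Real.sinh s*(Real.cosh s^2-1)) * hC2

lemma speed (s : ℝ) : d0 s ^ 2 + d1 s ^ 2 = 1 := by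
  have htrig := Real.sin_sq_add_cos_sq (th s)
  have h1 : d0 s ^ 2 + d1 s ^ 2 = ((Real.cosh s ^ 2)⁻¹) ^ 2 + (rr s * thd s) ^ 2 := by
    rw [d0, d1]; nlinarith [htrig]
  rw [h1, rr_thd s]
  have hQ := qs_sq s
  have hC2 := Real.cosh_sq s
  have hCne := cosh_ne s
  field_simp
  linear_combination (Real.sinh s ^ 2) * hQ +
    (-(Real.cosh s ^ 2 + Real.sinh s ^ 2 + 1)) * hC2

lemma gnorm (s : ℝ) : g0 s ^ 2 + g1 s ^ 2 = rr s ^ 2 := by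
  have htrig := Real.sin_sq_add_cos_sq (th s)
  rw [g0, g1]; nlinarith [htrig]

lemma rr_log (s : ℝ) : Real.log (rr s / (2 - rr s)) = 2 * s := by
  have hC := Real.cosh_pos s
  have h1 : rr s = Real.exp s / Real.cosh s := by
    rw [rr, ← Real.cosh_add_sinh]; field_simp
  have h2 : 2 - rr s = Real.exp (-s) / Real.cosh s := by
    rw [rr, ← Real.cosh_sub_sinh]; field_simp; rw [Real.cosh_eq]; ring
  rw [h2, h1]
  have h3 : Real.exp s / Real.cosh s / (Real.exp (-s) / Real.cosh s) = Real.exp (2*s) := by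
    rw [div_div_div_cancel_right₀, ← Real.exp_sub]
    · norm_num; ring_nf
    · exact hC.ne'
  rw [h3, Real.log_exp]

lemma contDiff_qs : ContDiff ℝ (⊤ : ℕ∞) qs := by
  rw [contDiff_iff_contDiffAt]
  intro s
  exact (Real.contDiffAt_sqrt (qs_arg_pos s).ne').comp s
    ((contDiff_const.add (Real.contDiff_sinh.pow 2)).contDiffAt)

lemma contDiff_rr : ContDiff ℝ (⊤ : ℕ∞) rr :=
  contDiff_const.add (Real.contDiff_sinh.div Real.contDiff_cosh cosh_ne)

lemma contDiff_th : ContDiff ℝ (⊤ : ℕ∞) th := by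
  have hlog : ContDiff ℝ (⊤ : ℕ∞) fun s => Real.log (qs s + Real.cosh s) := by
    rw [contDiff_iff_contDiffAt]
    intro s
    have hpos : 0 < qs s + Real.cosh s := add_pos (qs_pos s) (Real.cosh_pos s)
    exact (Real.contDiffAt_log.2 hpos.ne').comp s
      ((contDiff_qs.add Real.contDiff_cosh).contDiffAt)
  have harctan : ContDiff ℝ (⊤ : ℕ∞) fun s => Real.arctan (Real.sinh s / qs s) :=
    Real.contDiff_arctan.comp (Real.contDiff_sinh.div contDiff_qs (fun s => (qs_pos s).ne'))
  exact ((((Real.contDiff_cosh.mul contDiff_qs).add hlog).div_const 2).sub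
    ((Real.contDiff_sinh.mul contDiff_qs).div_const 2)).add harctan

lemma contDiff_g0 : ContDiff ℝ (⊤ : ℕ∞) g0 := contDiff_rr.mul (Real.contDiff_cos.comp contDiff_th)
lemma contDiff_g1 : ContDiff ℝ (⊤ : ℕ∞) g1 := contDiff_rr.mul (Real.contDiff_sin.comp contDiff_th)

end BddIsoAux

namespace BddIsoAux

def gp : Fin 2 → ℝ → ℝ := fun k => if k = 0 then g0 else g1
def dp : Fin 2 → ℝ → ℝ := fun k => if k = 0 then d0 else d1

lemma hasDerivAt_gp (k : Fin 2) (s : ℝ) : HasDerivAt (gp k) (dp k s) s := by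
  fin_cases k
  · simpa [gp, dp] using hasDerivAt_g0 s
  · simpa [gp, dp] using hasDerivAt_g1 s

lemma contDiff_gp (k : Fin 2) : ContDiff ℝ (⊤ : ℕ∞) (gp k) := by
  fin_cases k
  · simpa [gp] using contDiff_g0
  · simpa [gp] using contDiff_g1

lemma speed_gp (s : ℝ) : dp 0 s ^ 2 + dp 1 s ^ 2 = 1 := by
  simpa [dp] using speed s

lemma gnorm_gp (s : ℝ) : gp 0 s ^ 2 + gp 1 s ^ 2 = rr s ^ 2 := by
  simpa [gp] using gnorm s

lemma gp_sq_le (k : Fin 2) (s : ℝ) : gp k s ^ 2 ≤ 4 := by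
  have h := gnorm s
  have h0 := rr_pos s
  have h2 := rr_lt_two s
  fin_cases k
  · simp only [gp]; norm_num
    nlinarith [sq_nonneg (g1 s)]
  · simp only [gp]; norm_num
    nlinarith [sq_nonneg (g0 s)]

end BddIsoAux

open scoped InnerProductSpace
open BddIsoAux Topology

/-- `ℝⁿ` with the constant metric `c · ⟪·,·⟫` admits a smooth
isometric embedding into a bounded subset of `ℝ^{2n}`. -/
theorem exists_bounded_isometric_embedding_const_metric (n : ℕ) (hn : 0 < n)
    (c : ℝ) (hc : 0 < c) :
    ∃ Ψ : EuclideanSpace ℝ (Fin n) → EuclideanSpace ℝ (Fin (2 * n)),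
      ContDiff ℝ (⊤ : ℕ∞) Ψ ∧
      Topology.IsEmbedding Ψ ∧
      Bornology.IsBounded (Set.range Ψ) ∧
      (∀ (x v w : EuclideanSpace ℝ (Fin n)),
        ⟪fderiv ℝ Ψ x v, fderiv ℝ Ψ x w⟫_ℝ = c * ⟪v, w⟫_ℝ) := by
  classical
  set sc := Real.sqrt c with hsc_def
  have hsc : 0 < sc := Real.sqrt_pos.2 hc
  have hsc2 : sc ^ 2 = c := Real.sq_sqrt hc.le
  let e : Fin 2 × Fin n ≃ Fin (2 * n) := finProdFinEquiv
  let J : EuclideanSpace ℝ (Fin 2 × Fin n) ≃ₗᵢ[ℝ] EuclideanSpace ℝ (Fin (2 * n)) :=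
    LinearIsometryEquiv.piLpCongrLeft 2 ℝ ℝ e
  let Φ₀ : EuclideanSpace ℝ (Fin n) → (Fin 2 × Fin n → ℝ) :=
    fun x p => gp p.1 (sc * x p.2)
  let cle := PiLp.continuousLinearEquiv 2 ℝ (fun _ : Fin 2 × Fin n => ℝ)
  let cls : (Fin 2 × Fin n → ℝ) →L[ℝ] EuclideanSpace ℝ (Fin 2 × Fin n) :=
    (cle.symm : (Fin 2 × Fin n → ℝ) ≃L[ℝ] EuclideanSpace ℝ (Fin 2 × Fin n)).toContinuousLinearMap
  let Jl : EuclideanSpace ℝ (Fin 2 × Fin n) →L[ℝ] EuclideanSpace ℝ (Fin (2 * n)) :=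
    J.toLinearIsometry.toContinuousLinearMap
  let Φ : EuclideanSpace ℝ (Fin n) → EuclideanSpace ℝ (Fin 2 × Fin n) :=
    fun x => cls (Φ₀ x)
  let Ψ : EuclideanSpace ℝ (Fin n) → EuclideanSpace ℝ (Fin (2 * n)) := fun x => J (Φ x)
  -- coordinates of Ψ
  have hcoord : ∀ (x : EuclideanSpace ℝ (Fin n)) (p : Fin 2 × Fin n),
      Ψ x (e p) = gp p.1 (sc * x p.2) := by
    intro x p
    show (LinearIsometryEquiv.piLpCongrLeft 2 ℝ ℝ e (Φ x)) (e p) = _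
    rw [LinearIsometryEquiv.piLpCongrLeft_apply]
    show (Φ x) (e.symm (e p)) = _
    rw [Equiv.symm_apply_apply]
    rfl
  -- smoothness
  have hΦ₀ : ContDiff ℝ (⊤ : ℕ∞) Φ₀ := by
    apply contDiff_pi.2
    intro p
    exact (contDiff_gp p.1).comp
      (contDiff_const.mul (EuclideanSpace.proj p.2 : EuclideanSpace ℝ (Fin n) →L[ℝ] ℝ).contDiff)
  have hΦ : ContDiff ℝ (⊤ : ℕ∞) Φ := cls.contDiff.comp hΦ₀
  have hΨ : ContDiff ℝ (⊤ : ℕ∞) Ψ := Jl.contDiff.comp hΦ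
  -- derivative
  let M : EuclideanSpace ℝ (Fin n) →
      (EuclideanSpace ℝ (Fin n) →L[ℝ] EuclideanSpace ℝ (Fin 2 × Fin n)) := fun x =>
    cls.comp
      (ContinuousLinearMap.pi fun p =>
        (sc * dp p.1 (sc * x p.2)) • (EuclideanSpace.proj p.2))
  have hM : ∀ x, HasFDerivAt Φ (M x) x := by
    intro x
    have h0 : HasFDerivAt Φ₀
        (ContinuousLinearMap.pi fun p =>
          (sc * dp p.1 (sc * x p.2)) • (EuclideanSpace.proj p.2 :
            EuclideanSpace ℝ (Fin n) →L[ℝ] ℝ)) x := by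
      apply hasFDerivAt_pi.2
      intro p
      have h1 : HasFDerivAt (fun y : EuclideanSpace ℝ (Fin n) => sc * y p.2)
          (sc • (EuclideanSpace.proj p.2 : EuclideanSpace ℝ (Fin n) →L[ℝ] ℝ)) x :=
        (EuclideanSpace.proj p.2 : EuclideanSpace ℝ (Fin n) →L[ℝ] ℝ).hasFDerivAt.const_mul sc
      have h2 := (hasDerivAt_gp p.1 (sc * x p.2)).comp_hasFDerivAt x h1
      refine h2.congr_fderiv (Eq.symm ?_)
      rw [smul_smul, mul_comm]
    exact (cls.hasFDerivAt).comp x h0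
  have hΨd : ∀ x, HasFDerivAt Ψ (Jl.comp (M x)) x :=
    fun x => (Jl.hasFDerivAt).comp x (hM x)
  have hΦcoord : ∀ (x : EuclideanSpace ℝ (Fin n)) (p : Fin 2 × Fin n),
      Φ x p = gp p.1 (sc * x p.2) := fun x p => rfl
  refine ⟨Ψ, hΨ, ?_, ?_, ?_⟩
  · -- embedding
    let Ny : Fin n → EuclideanSpace ℝ (Fin (2 * n)) → ℝ :=
      fun j y => Real.sqrt ((y (e (0, j))) ^ 2 + (y (e (1, j))) ^ 2)
    have hNcont : ∀ j, Continuous (Ny j) := by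
      intro j
      apply Real.continuous_sqrt.comp
      exact (((EuclideanSpace.proj (e (0, j)) :
          EuclideanSpace ℝ (Fin (2 * n)) →L[ℝ] ℝ).continuous).pow 2).add
        (((EuclideanSpace.proj (e (1, j)) :
          EuclideanSpace ℝ (Fin (2 * n)) →L[ℝ] ℝ).continuous).pow 2)
    have hNΨ : ∀ (x : EuclideanSpace ℝ (Fin n)) (j : Fin n),
        Ny j (Ψ x) = rr (sc * x j) := by
      intro x j
      show Real.sqrt ((Ψ x (e (0, j))) ^ 2 + (Ψ x (e (1, j))) ^ 2) = _
      rw [hcoord x (0, j), hcoord x (1, j)]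
      rw [gnorm_gp, Real.sqrt_sq (rr_pos _).le]
    let U : Set (EuclideanSpace ℝ (Fin (2 * n))) := {y | ∀ j, Ny j y ∈ Set.Ioo (0:ℝ) 2}
    have hUopen : IsOpen U := by
      have hU : U = ⋂ j, (Ny j) ⁻¹' (Set.Ioo 0 2) := by
        ext y; simp [U, Set.mem_iInter, Set.mem_preimage]
      rw [hU]
      exact isOpen_iInter_of_finite fun j => (isOpen_Ioo).preimage (hNcont j)
    have hmem : ∀ x, Ψ x ∈ U := by
      intro x j
      rw [hNΨ]
      exact ⟨rr_pos _, rr_lt_two _⟩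
    let G : EuclideanSpace ℝ (Fin (2 * n)) → EuclideanSpace ℝ (Fin n) :=
      fun y => (WithLp.equiv 2 (Fin n → ℝ)).symm
        (fun j => Real.log (Ny j y / (2 - Ny j y)) / (2 * sc))
    have hGΨ : ∀ x, G (Ψ x) = x := by
      intro x
      ext j
      show Real.log (Ny j (Ψ x) / (2 - Ny j (Ψ x))) / (2 * sc) = x j
      rw [hNΨ, rr_log]
      field_simp
    have hG0cont : ContinuousOn
        (fun y => (fun j => Real.log (Ny j y / (2 - Ny j y)) / (2 * sc) : Fin n → ℝ)) U := by
      apply continuousOn_pi.2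
      intro j
      intro y hy
      have hy1 : 0 < Ny j y := (hy j).1
      have hy2 : Ny j y < 2 := (hy j).2
      have h1 : ContinuousAt (fun y => Ny j y / (2 - Ny j y)) y :=
        ((hNcont j).continuousAt).div ((continuous_const.sub (hNcont j)).continuousAt)
          (by linarith)
      have h2 : ContinuousAt (fun y => Real.log (Ny j y / (2 - Ny j y))) y :=
        h1.log (ne_of_gt (div_pos hy1 (by linarith)))
      exact (h2.div_const _).continuousWithinAt
    have hGcont : ContinuousOn G U := by
      have : G = (PiLp.continuousLinearEquiv 2 ℝ (fun _ : Fin n => ℝ)).symm.toContinuousLinearMap ∘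
          (fun y => (fun j => Real.log (Ny j y / (2 - Ny j y)) / (2 * sc) : Fin n → ℝ)) := rfl
      rw [this]
      exact ((PiLp.continuousLinearEquiv 2 ℝ
        (fun _ : Fin n => ℝ)).symm.toContinuousLinearMap.continuous).comp_continuousOn hG0cont
    have hΨcont : Continuous Ψ := hΨ.continuous
    let Ψ' : EuclideanSpace ℝ (Fin n) → U := fun x => ⟨Ψ x, hmem x⟩
    have h1 : Continuous Ψ' := hΨcont.subtype_mk _
    have h2 : Continuous (U.restrict G) := hGcont.restrict
    have hleft : Function.LeftInverse (U.restrict G) Ψ' := fun x => hGΨ x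
    have hembΨ' : Topology.IsEmbedding Ψ' :=
      Function.LeftInverse.isEmbedding hleft h2 h1
    exact Topology.IsEmbedding.subtypeVal.comp hembΨ'
  · -- bounded
    apply isBounded_iff_forall_norm_le.2
    refine ⟨Real.sqrt (4 * (Fintype.card (Fin 2 × Fin n))), ?_⟩
    rintro y ⟨x, rfl⟩
    show ‖J (Φ x)‖ ≤ _
    rw [J.norm_map, EuclideanSpace.norm_eq]
    apply Real.sqrt_le_sqrt
    have hb : ∀ p : Fin 2 × Fin n, ‖Φ x p‖ ^ 2 ≤ 4 := by
      intro p
      rw [hΦcoord, Real.norm_eq_abs, sq_abs]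
      exact gp_sq_le _ _
    calc ∑ p, ‖Φ x p‖ ^ 2 ≤ ∑ _p : Fin 2 × Fin n, (4:ℝ) := Finset.sum_le_sum fun p _ => hb p
      _ = 4 * (Fintype.card (Fin 2 × Fin n)) := by
          rw [Finset.sum_const, Finset.card_univ, nsmul_eq_mul]; ring
  · -- isometry
    intro x v w
    rw [(hΨd x).fderiv]
    have hJ : ∀ u : EuclideanSpace ℝ (Fin n),
        (Jl.comp (M x)) u = J (M x u) := fun u => rfl
    rw [hJ v, hJ w, LinearIsometryEquiv.inner_map_map]
    have hMapp : ∀ (u : EuclideanSpace ℝ (Fin n)) (p : Fin 2 × Fin n),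
        (M x u) p = sc * dp p.1 (sc * x p.2) * u p.2 := by
      intro u p
      show (ContinuousLinearMap.pi fun p =>
        (sc * dp p.1 (sc * x p.2)) • (EuclideanSpace.proj p.2 :
          EuclideanSpace ℝ (Fin n) →L[ℝ] ℝ)) u p = _
      simp [ContinuousLinearMap.pi_apply]
    rw [PiLp.inner_apply, PiLp.inner_apply]
    simp only [hMapp, RCLike.inner_apply, conj_trivial]
    rw [Fintype.sum_prod_type]
    rw [Fin.sum_univ_two, ← Finset.sum_add_distrib, Finset.mul_sum]
    apply Finset.sum_congr rfl
    intro j _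
    have hs := speed_gp (sc * x j)
    linear_combination (v j * w j * sc ^ 2) * hs + (v j * w j) * hsc2
end
end

section
/- Let n and N be positive natural numbers, let c > 0, and let Q₁, g : ℝⁿ → (ℝⁿ →L[ℝ] ℝⁿ →L[ℝ] ℝ) be continuous fields of symmetric bilinear forms with g(x)(v,w) = Q₁(x)(v,w) + c·⟪v,w⟫ for all x, v, w. Suppose u : ℝⁿ → ℝ^N is a C^∞ map which is ℤⁿ-periodic (u(x + k) = u(x) for all k ∈ ℤⁿ) and satisfies ⟪Du_x v, Du_x w⟫ = Q₁(x)(v,w) for all x, v, w, where Du_x = fderiv ℝ u x. Then there exists a map F : ℝⁿ → ℝ^N × ℝⁿ such that: F is C^∞; F is a topological embedding; for every x, v, w one has ⟪DF_x v, DF_x w⟫ = g(x)(v,w) (product inner product on ℝ^N × ℝⁿ); and F is equivariant for the deck transformations: for every integer vector k ∈ ℤⁿ and every x ∈ ℝⁿ, F(x + k) = ((F x).1, (F x).2 + √c · k), i.e. the deck transformation x ↦ x + k extends to the isometry (y, z) ↦ (y, z + √c·k) of the ambient space ℝ^N × ℝⁿ. -/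
open scoped InnerProductSpace

/-- Theorem 2 of the paper, in coordinates: if `g = Q₁ + c·⟪·,·⟫`
and `u : ℝⁿ → ℝ^N` is a smooth ℤⁿ-periodic isometric immersion of `(ℝⁿ, Q₁)`,
then `(ℝⁿ, g)` admits a smooth isometric embedding `F` into `ℝ^N × ℝⁿ` (with the
product inner product) which is equivariant for the deck transformations: the
deck transformation `x ↦ x + k` extends to the ambient isometry
`(y, z) ↦ (y, z + √c·k)`. -/
theorem exists_equivariant_isometric_embedding_universal_cover
    (n N : ℕ) (hn : 0 < n) (hN : 0 < N) (c : ℝ) (hc : 0 < c)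
    (Q₁ g : EuclideanSpace ℝ (Fin n) →
      (EuclideanSpace ℝ (Fin n) →L[ℝ] EuclideanSpace ℝ (Fin n) →L[ℝ] ℝ))
    (hQ₁cont : Continuous Q₁) (hgcont : Continuous g)
    (hQ₁symm : ∀ x v w, Q₁ x v w = Q₁ x w v)
    (hgsymm : ∀ x v w, g x v w = g x w v)
    (hdecomp : ∀ x v w, g x v w = Q₁ x v w + c * ⟪v, w⟫_ℝ)
    (u : EuclideanSpace ℝ (Fin n) → EuclideanSpace ℝ (Fin N))
    (hu_smooth : ContDiff ℝ (⊤ : ℕ∞) u)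
    (hu_per : ∀ (x : EuclideanSpace ℝ (Fin n)) (k : Fin n → ℤ),
      u (x + (show EuclideanSpace ℝ (Fin n) from WithLp.toLp 2 fun i => (k i : ℝ))) = u x)
    (hu_isom : ∀ x v w, ⟪fderiv ℝ u x v, fderiv ℝ u x w⟫_ℝ = Q₁ x v w) :
    ∃ F : EuclideanSpace ℝ (Fin n) →
        EuclideanSpace ℝ (Fin N) × EuclideanSpace ℝ (Fin n),
      ContDiff ℝ (⊤ : ℕ∞) F ∧
      Topology.IsEmbedding F ∧
      (∀ x v w,
        ⟪(fderiv ℝ F x v).1, (fderiv ℝ F x w).1⟫_ℝ +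
          ⟪(fderiv ℝ F x v).2, (fderiv ℝ F x w).2⟫_ℝ = g x v w) ∧
      (∀ (k : Fin n → ℤ) (x : EuclideanSpace ℝ (Fin n)),
        F (x + (show EuclideanSpace ℝ (Fin n) from WithLp.toLp 2 fun i => (k i : ℝ))) =
          ((F x).1,
            (F x).2 +
              (show EuclideanSpace ℝ (Fin n) from
                WithLp.toLp 2 fun i => Real.sqrt c * (k i : ℝ)))) := by
  have hsc : Real.sqrt c ≠ 0 := ne_of_gt (Real.sqrt_pos.2 hc)
  refine ⟨fun x => (u x, Real.sqrt c • x), ?_, ?_, ?_, ?_⟩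
  · exact hu_smooth.prodMk (by fun_prop)
  · have hG : Continuous (fun p : EuclideanSpace ℝ (Fin N) × EuclideanSpace ℝ (Fin n) =>
        (Real.sqrt c)⁻¹ • p.2) := (by fun_prop)
    refine Topology.IsEmbedding.of_comp
      ((hu_smooth.continuous).prodMk (by fun_prop)) hG ?_
    have : ((fun p : EuclideanSpace ℝ (Fin N) × EuclideanSpace ℝ (Fin n) =>
        (Real.sqrt c)⁻¹ • p.2) ∘ (fun x => (u x, Real.sqrt c • x))) = id := by
      funext x
      simp [Function.comp, smul_smul, inv_mul_cancel₀ hsc]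
    rw [this]
    exact Topology.IsEmbedding.id
  · intro x v w
    have hdF : HasFDerivAt (fun x : EuclideanSpace ℝ (Fin n) => (u x, Real.sqrt c • x))
        ((fderiv ℝ u x).prod (Real.sqrt c • ContinuousLinearMap.id ℝ _)) x :=
      ((hu_smooth.differentiable (by simp) x).hasFDerivAt).prodMk
        ((hasFDerivAt_id x).const_smul (Real.sqrt c))
    rw [hdF.fderiv]
    simp only [ContinuousLinearMap.prod_apply, ContinuousLinearMap.smul_apply,
      ContinuousLinearMap.id_apply]
    rw [hu_isom, real_inner_smul_left, real_inner_smul_right, hdecomp]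
    ring_nf
    rw [Real.sq_sqrt hc.le]
    ring
  · intro k x
    refine Prod.ext (hu_per x k) ?_
    simp only [smul_add]
    rfl
end
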